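/- arXiv:1705.01073 — 2 statements merged into one kernel-verified Lean document; each statement's English description precedes it below -/
import Mathlib

section
/- Along any solution of the continuous inertial mirror descent system, assuming f∘x is differentiable, the trajectory derivative of the function W_*(ζ) = W(ζ) − ⟨ζ, x*⟩ satisfies, for every t ≥ 0, the inequality d/dt W_*(ζ(t)) ≤ (f(x*) − f(x(t))) − μ(t)·d/dt[f(x(t)) − f*]. -/
/-!
Differentiating along the trajectory, `d/dt W_*(ζ) = ⟪∇W(ζ) - x*, ζ'⟫ = ⟪μ x' + x - x*, -∇f(x)⟫`
by the two equations of the system. The term `-μ ⟪∇f(x), x'⟫` is `-μ · d/dt f(x)`, and the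
remaining term `⟪∇f(x), x* - x⟫` is at most `f(x*) - f(x)` by the first-order characterisation
of convexity of `f`.
-/

open RealInnerProductSpace Set

theorem ConvexOn.fderiv_apply_sub_le {E : Type*} [NormedAddCommGroup E] [NormedSpace ℝ E]
    {s : Set E} {f : E → ℝ} (hf : ConvexOn ℝ s f) {a b : E} (ha : a ∈ s) (hb : b ∈ s)
    (hfa : DifferentiableAt ℝ f a) :
    fderiv ℝ f a (b - a) ≤ f b - f a := by
  let ℓ : ℝ →ᵃ[ℝ] E := AffineMap.lineMap a b
  have hℓ0 : ℓ 0 = a := AffineMap.lineMap_apply_zero a b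
  have hℓ1 : ℓ 1 = b := AffineMap.lineMap_apply_one a b
  have hderiv : HasDerivAt (f ∘ ℓ) (fderiv ℝ f a (b - a)) 0 := by
    rw [← hℓ0] at hfa
    simpa only [hℓ0] using hfa.hasFDerivAt.comp_hasDerivAt 0 AffineMap.hasDerivAt_lineMap
  have hslope := (hf.comp_affineMap ℓ).le_slope_of_hasDerivAt
    (by simpa only [mem_preimage, hℓ0] using ha) (by simpa only [mem_preimage, hℓ1] using hb)
    zero_lt_one hderiv
  simpa [slope, hℓ0, hℓ1] using hslope

theorem HasGradientAt.comp_hasDerivAt {F : Type*} [NormedAddCommGroup F]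
    [InnerProductSpace ℝ F] [CompleteSpace F] {g : F → ℝ} {g' : F} {c : ℝ → F} {c' : F} {t : ℝ}
    (hg : HasGradientAt g g' (c t)) (hc : HasDerivAt c c' t) :
    HasDerivAt (fun s => g (c s)) ⟪g', c'⟫ t := by
  have h := hg.hasFDerivAt.comp_hasDerivAt t hc
  rwa [InnerProductSpace.toDual_apply_apply] at h

theorem imd_trajectory_derivative_inequality_general
    {H : Type*} [NormedAddCommGroup H] [InnerProductSpace ℝ H]
    [FiniteDimensional ℝ H]
    (f W : H → ℝ) (μ : ℝ → ℝ) (ζ x : ℝ → H) (xstar : H)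
    (hf_conv : ConvexOn ℝ Set.univ f)
    (hf_diff : Differentiable ℝ f)
    (hW_diff : Differentiable ℝ W)
    (hζ_diff : Differentiable ℝ ζ) (hx_diff : Differentiable ℝ x)
    (hζ' : ∀ t ≥ (0 : ℝ), deriv ζ t = -gradient f (x t))
    (hmirror : ∀ t ≥ (0 : ℝ), μ t • deriv x t + x t = gradient W (ζ t)) :
    ∀ t ≥ (0 : ℝ),
      deriv (fun s => W (ζ s) - ⟪ζ s, xstar⟫) t
        ≤ (f xstar - f (x t)) - μ t * deriv (fun s => f (x s) - f xstar) t := by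
  intro t ht
  have hWstar : HasDerivAt (fun s => W (ζ s) - ⟪ζ s, xstar⟫) _ t :=
    ((hW_diff (ζ t)).hasGradientAt.comp_hasDerivAt (hζ_diff t).hasDerivAt).sub
      ((hζ_diff t).hasDerivAt.inner ℝ (hasDerivAt_const t xstar))
  have hfx := (hf_diff (x t)).hasGradientAt.comp_hasDerivAt (hx_diff t).hasDerivAt
  have hconv : ⟪gradient f (x t), xstar - x t⟫ ≤ f xstar - f (x t) := by
    simpa only [inner_gradient_left] using
      hf_conv.fderiv_apply_sub_le (mem_univ _) (mem_univ _) (hf_diff (x t))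
  rw [hWstar.deriv, (hfx.sub_const _).deriv, ← hmirror t ht, hζ' t ht]
  simp only [inner_zero_right, inner_add_left, inner_smul_left, inner_neg_left,
    inner_neg_right, inner_sub_right, real_inner_comm, RCLike.conj_to_real] at hconv ⊢
  linarith

/-- Along any solution of the continuous inertial mirror descent system, the
trajectory derivative of `W_*(ζ) = W(ζ) − ⟨ζ, x*⟩` satisfies, for every `t ≥ 0`,
`d/dt W_*(ζ(t)) ≤ (f(x*) − f(x(t))) − μ(t)·d/dt[f(x(t)) − f*]`. -/
theorem imd_trajectory_derivative_inequality
    {H : Type*} [NormedAddCommGroup H] [InnerProductSpace ℝ H]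
    [FiniteDimensional ℝ H]
    (f W : H → ℝ) (μ : ℝ → ℝ) (ζ x : ℝ → H) (xstar : H)
    (hf_conv : ConvexOn ℝ Set.univ f)
    (hf_diff : Differentiable ℝ f)
    (hmin : ∀ y, f xstar ≤ f y)
    (hW_conv : ConvexOn ℝ Set.univ W)
    (hW_diff : Differentiable ℝ W)
    (hW_grad_cont : Continuous (gradient W))
    (hW0 : W 0 = 0) (hWgrad0 : gradient W 0 = 0)
    (hμ_diff : Differentiable ℝ μ)
    (hμ_nonneg : ∀ t ≥ (0 : ℝ), 0 ≤ μ t)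
    (hζ_diff : Differentiable ℝ ζ) (hx_diff : Differentiable ℝ x)
    (hζ0 : ζ 0 = 0) (hx0 : x 0 = gradient W 0)
    (hζ' : ∀ t ≥ (0 : ℝ), deriv ζ t = -gradient f (x t))
    (hmirror : ∀ t ≥ (0 : ℝ), μ t • deriv x t + x t = gradient W (ζ t))
    (hfx_diff : Differentiable ℝ (fun s => f (x s))) :
    ∀ t ≥ (0 : ℝ),
      deriv (fun s => W (ζ s) - ⟪ζ s, xstar⟫) t
        ≤ (f xstar - f (x t)) - μ t * deriv (fun s => f (x s) - f xstar) t :=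
  imd_trajectory_derivative_inequality_general f W μ ζ x xstar hf_conv hf_diff hW_diff hζ_diff
    hx_diff hζ' hmirror
end

section
/- Consider the Euclidean case W(ζ) = ‖ζ‖²/2 (so ∇W(ζ) = ζ and V(x) = ‖x‖²/2) of the continuous inertial mirror descent system with μ(t) = t: let ζ, x : [0,∞) → H be differentiable curves with ζ'(t) = −∇f(x(t)), ζ(0) = 0, and t·x'(t) + x(t) = ζ(t) for all t ≥ 0, with x(0) = 0. Then for every t > 0, f(x(t)) − f* ≤ ‖x*‖²/(2t). -/
open RealInnerProductSpace Set

/-!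
The energy `E t = t * (f (x t) - f x*) + ‖ζ t - x*‖² / 2` is nonincreasing on `[0, ∞)`:
substituting `t • x' = ζ - x` and `ζ' = -∇f(x)` gives
`E' = f x - f x* + ⟪∇f(x), x* - x⟫`, which is `≤ 0` by the first-order characterization of
convexity. Hence `t * (f (x t) - f x*) ≤ E t ≤ E 0 = ‖x*‖² / 2`.
-/

theorem ConvexOn.add_fderiv_sub_le {E : Type*} [NormedAddCommGroup E] [NormedSpace ℝ E]
    {f : E → ℝ} (hf : ConvexOn ℝ univ f) {a : E} (ha : DifferentiableAt ℝ f a) (b : E) :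
    f a + fderiv ℝ f a (b - a) ≤ f b := by
  let L : ℝ →ᵃ[ℝ] E := AffineMap.lineMap a b
  have hderiv : HasDerivAt (f ∘ L) (fderiv ℝ f a (b - a)) 0 :=
    ha.hasFDerivAt.comp_hasDerivAt_of_eq 0 AffineMap.hasDerivAt_lineMap
      (AffineMap.lineMap_apply_zero a b).symm
  have hslope := (hf.comp_affineMap L).le_slope_of_hasDerivAt (mem_univ 0) (mem_univ 1)
    one_pos hderiv
  simp only [slope_def_field, Function.comp_apply, L, AffineMap.lineMap_apply_zero,
    AffineMap.lineMap_apply_one, sub_zero, div_one] at hslope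
  linarith

noncomputable def lyapunovEnergy {H : Type*} [NormedAddCommGroup H] [InnerProductSpace ℝ H]
    (f : H → ℝ) (ζ x : ℝ → H) (xstar : H) (t : ℝ) : ℝ :=
  t * (f (x t) - f xstar) + ‖ζ t - xstar‖ ^ 2 / 2

section Lyapunov

variable {H : Type*} [NormedAddCommGroup H] [InnerProductSpace ℝ H]
  {f : H → ℝ} {ζ x : ℝ → H} {xstar : H}

theorem hasDerivAt_lyapunovEnergy {ζ' x' : H} {t : ℝ} (hζ : HasDerivAt ζ ζ' t)
    (hx : HasDerivAt x x' t) (hf : DifferentiableAt ℝ f (x t)) :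
    HasDerivAt (lyapunovEnergy f ζ x xstar)
      (f (x t) - f xstar + fderiv ℝ f (x t) (t • x') + ⟪ζ t - xstar, ζ'⟫) t := by
  have hfx : HasDerivAt (fun s ↦ f (x s) - f xstar) (fderiv ℝ f (x t) x') t :=
    (hf.hasFDerivAt.comp_hasDerivAt t hx).sub_const _
  have hdist : HasDerivAt (fun s ↦ ‖ζ s - xstar‖ ^ 2 / 2) ⟪ζ t - xstar, ζ'⟫ t :=
    ((hζ.sub_const xstar).norm_sq.div_const 2).congr_deriv (by ring)
  exact (((hasDerivAt_id' t).mul hfx).add hdist).congr_deriv (by rw [map_smul, smul_eq_mul]; ring)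

theorem antitoneOn_lyapunovEnergy [CompleteSpace H] (hf_conv : ConvexOn ℝ univ f)
    (hf_diff : Differentiable ℝ f) (hζ_diff : Differentiable ℝ ζ) (hx_diff : Differentiable ℝ x)
    (hζ' : ∀ t ≥ (0 : ℝ), deriv ζ t = -gradient f (x t))
    (hmirror : ∀ t ≥ (0 : ℝ), t • deriv x t + x t = ζ t) :
    AntitoneOn (lyapunovEnergy f ζ x xstar) (Ici 0) := by
  have hE (t : ℝ) := hasDerivAt_lyapunovEnergy (xstar := xstar) (hζ_diff t).hasDerivAt
    (hx_diff t).hasDerivAt (hf_diff (x t))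
  refine antitoneOn_of_hasDerivWithinAt_nonpos (convex_Ici 0)
    (continuous_iff_continuousAt.2 fun t ↦ (hE t).continuousAt).continuousOn
    (fun t _ ↦ (hE t).hasDerivWithinAt) fun t ht ↦ ?_
  rw [interior_Ici, mem_Ioi] at ht
  have hfirst_order := hf_conv.add_fderiv_sub_le (hf_diff (x t)) xstar
  rw [hζ' t ht.le, eq_sub_of_add_eq (hmirror t ht.le)]
  rw [← inner_gradient_left] at hfirst_order ⊢
  have hinner : ⟪gradient f (x t), ζ t - x t⟫ + ⟪ζ t - xstar, -gradient f (x t)⟫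
      = ⟪gradient f (x t), xstar - x t⟫ := by
    simp only [inner_neg_right, inner_sub_right, real_inner_comm (gradient f (x t))]
    ring
  linarith

end Lyapunov

theorem imd_error_bound_euclidean_general
    {H : Type*} [NormedAddCommGroup H] [InnerProductSpace ℝ H]
    [FiniteDimensional ℝ H]
    (f : H → ℝ) (ζ x : ℝ → H) (xstar : H)
    (hf_conv : ConvexOn ℝ Set.univ f)
    (hf_diff : Differentiable ℝ f)
    (hζ_diff : Differentiable ℝ ζ) (hx_diff : Differentiable ℝ x)
    (hζ0 : ζ 0 = 0)
    (hζ' : ∀ t ≥ (0 : ℝ), deriv ζ t = -gradient f (x t))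
    (hmirror : ∀ t ≥ (0 : ℝ), t • deriv x t + x t = ζ t) :
    ∀ t > (0 : ℝ),
      f (x t) - f xstar ≤ ‖xstar‖ ^ 2 / (2 * t) := by
  intro t ht
  have hdecay : lyapunovEnergy f ζ x xstar t ≤ lyapunovEnergy f ζ x xstar 0 :=
    antitoneOn_lyapunovEnergy hf_conv hf_diff hζ_diff hx_diff hζ' hmirror
      self_mem_Ici ht.le ht.le
  have hstart : lyapunovEnergy f ζ x xstar 0 = ‖xstar‖ ^ 2 / 2 := by
    simp [lyapunovEnergy, hζ0]
  have hdist_nonneg : 0 ≤ ‖ζ t - xstar‖ ^ 2 / 2 := by positivity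
  rw [le_div_iff₀ (by positivity)]
  rw [hstart, lyapunovEnergy] at hdecay
  linarith

/-- Euclidean case `W(ζ) = ‖ζ‖²/2` (so `∇W(ζ) = ζ`, `V(x) = ‖x‖²/2`) of the
continuous inertial mirror descent system with `μ(t) = t`: if
`ζ'(t) = −∇f(x(t))`, `ζ(0) = 0`, and `t·x'(t) + x(t) = ζ(t)` for all `t ≥ 0`,
with `x(0) = 0`, then for every `t > 0`, `f(x(t)) − f* ≤ ‖x*‖²/(2t)`. -/
theorem imd_error_bound_euclidean
    {H : Type*} [NormedAddCommGroup H] [InnerProductSpace ℝ H]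
    [FiniteDimensional ℝ H]
    (f : H → ℝ) (ζ x : ℝ → H) (xstar : H)
    (hf_conv : ConvexOn ℝ Set.univ f)
    (hf_diff : Differentiable ℝ f)
    (hmin : ∀ y, f xstar ≤ f y)
    (hζ_diff : Differentiable ℝ ζ) (hx_diff : Differentiable ℝ x)
    (hζ0 : ζ 0 = 0) (hx0 : x 0 = 0)
    (hζ' : ∀ t ≥ (0 : ℝ), deriv ζ t = -gradient f (x t))
    (hmirror : ∀ t ≥ (0 : ℝ), t • deriv x t + x t = ζ t)
    (hfx_cont : Continuous (fun s => f (x s)))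
    (hfx_diff : Differentiable ℝ (fun s => f (x s))) :
    ∀ t > (0 : ℝ),
      f (x t) - f xstar ≤ ‖xstar‖ ^ 2 / (2 * t) :=
  imd_error_bound_euclidean_general f ζ x xstar hf_conv hf_diff hζ_diff hx_diff hζ0 hζ' hmirror
end
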